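/- Let g ∈ (0, 1/4) be real and set x := 1/(2√g). Then for every m ∈ ℕ, W_m(g) = 1/(√g·U_m(x)·U_{m+1}(x)), where U_n denotes the n-th Chebyshev polynomial of the second kind. -/

import Mathlib

/-- The sequence `X_m(g)` defined by `X_0 = 1`, `X_{m+1} = 1/(1 - g X_m)`. -/
noncomputable def Xseq (g : ℝ) : ℕ → ℝ
  | 0 => 1
  | m + 1 => 1 / (1 - g * Xseq g m)

/-- The fixed-height partition functions `W_0(g) = 1`, `W_m(g) = X_m(g) - X_{m-1}(g)` for `m ≥ 1`. -/
noncomputable def Wseq (g : ℝ) : ℕ → ℝ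
  | 0 => 1
  | m + 1 => Xseq g (m + 1) - Xseq g m

/-!
Writing `g = s²` with `2 s x = 1`, the continued fraction `X_m` is the ratio
`U_m(x) / (s U_{m+1}(x))`: the recursion `X ↦ 1/(1 - g X)` is the Möbius map of the
three-term recurrence of `U`. The difference of two consecutive ratios then has numerator
`U_{m+1}² - U_m U_{m+2}`, which is identically `1` (a Cassini-type identity), and for
`g < 1/4` we have `x > 1`, where no `U_n` vanishes.
-/

open Polynomial Polynomial.Chebyshev

namespace Polynomial.Chebyshev

theorem U_add_one_sq_sub_U_mul_U_add_two (R : Type*) [CommRing R] (n : ℤ) :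
    U R (n + 1) ^ 2 - U R n * U R (n + 2) = 1 := by
  induction n with
  | zero => simp [U_two]; ring
  | succ n ih =>
    have h₁ := U_add_two R (n + 1)
    have h₂ := U_add_two R n
    linear_combination (norm := ring_nf) ih - U R (n + 1) * h₁ + U R (n + 2) * h₂
  | pred n ih =>
    have h₁ := U_sub_one R (-n)
    have h₂ := U_add_two R (-n)
    linear_combination (norm := ring_nf) ih - U R (-n + 1) * h₁ + U R (-n) * h₂

theorem eval_U_real_pos (n : ℕ) {x : ℝ} (hx : 1 ≤ x) : 0 < (U ℝ n).eval x := by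
  induction n with
  | zero => simp
  | succ n ih =>
    have hT := one_le_eval_T_real ((n : ℤ) + 1) hx
    rw [Nat.cast_succ, U_eq_X_mul_U_add_T, eval_add, eval_mul, eval_X]
    nlinarith

end Polynomial.Chebyshev

section ContinuedFraction

variable {s x : ℝ}

theorem Xseq_sq_eq_div_eval_U (hsx : 2 * s * x = 1) (hU : ∀ n : ℕ, (U ℝ n).eval x ≠ 0) (n : ℕ) :
    Xseq (s ^ 2) n = (U ℝ n).eval x / (s * (U ℝ (n + 1)).eval x) := by
  have hs : s ≠ 0 := by rintro rfl; simp at hsx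
  induction n with
  | zero =>
    simp only [Xseq, Nat.cast_zero, zero_add, U_zero, U_one, eval_one, eval_mul, eval_X, eval_ofNat]
    rw [show s * (2 * x) = 1 by linear_combination hsx, div_one]
  | succ n ih =>
    have hn₁ := hU (n + 1)
    have hn₂ := hU (n + 2)
    push_cast at hn₁ hn₂ ⊢
    have hrec : (U ℝ (n + 2)).eval x = 2 * x * (U ℝ (n + 1)).eval x - (U ℝ n).eval x := by
      simp [U_add_two]
    have hden : 1 - s ^ 2 * ((U ℝ n).eval x / (s * (U ℝ (n + 1)).eval x)) =
        s * (U ℝ (n + 2)).eval x / (U ℝ (n + 1)).eval x := by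
      rw [hrec]
      field_simp
      linear_combination -(U ℝ (n + 1)).eval x * hsx
    rw [Xseq, ih, hden, one_div_div, add_assoc, one_add_one_eq_two]

theorem Wseq_sq_eq_one_div_eval_U (hsx : 2 * s * x = 1) (hU : ∀ n : ℕ, (U ℝ n).eval x ≠ 0)
    (m : ℕ) : Wseq (s ^ 2) m = 1 / (s * (U ℝ m).eval x * (U ℝ (m + 1)).eval x) := by
  cases m with
  | zero =>
    simp only [Wseq, Nat.cast_zero, zero_add, U_zero, U_one, eval_one, eval_mul, eval_X, eval_ofNat]
    rw [show s * 1 * (2 * x) = 1 by linear_combination hsx, div_one]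
  | succ m =>
    have hs : s ≠ 0 := by rintro rfl; simp at hsx
    have h₀ := hU m
    have h₁ := hU (m + 1)
    have h₂ := hU (m + 2)
    have hcassini := U_add_one_sq_sub_U_mul_U_add_two ℝ m
    apply_fun eval x at hcassini
    push_cast at h₁ h₂ ⊢
    simp only [eval_sub, eval_pow, eval_mul, eval_one] at hcassini
    rw [Wseq, Xseq_sq_eq_div_eval_U hsx hU, Xseq_sq_eq_div_eval_U hsx hU]
    push_cast
    rw [add_assoc, one_add_one_eq_two]
    field_simp
    linear_combination hcassini

end ContinuedFraction

theorem stmt_2 (g : ℝ) (hg0 : 0 < g) (hg1 : g < 1/4) (x : ℝ) (hx : x = 1 / (2 * Real.sqrt g))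
    (m : ℕ) :
    Wseq g m =
      1 / (Real.sqrt g * (Polynomial.Chebyshev.U ℝ (m : ℤ)).eval x
            * (Polynomial.Chebyshev.U ℝ (m + 1 : ℤ)).eval x) := by
  have hs : 0 < √g := Real.sqrt_pos.mpr hg0
  have hsx : 2 * √g * x = 1 := by rw [hx]; field_simp
  have hx1 : 1 ≤ x := by
    have : √g < 1 / 2 := by
      rw [Real.sqrt_lt' (by norm_num)]
      linarith
    rw [hx, le_div_iff₀ (by positivity)]
    linarith
  have hU (n : ℕ) : (U ℝ n).eval x ≠ 0 := (eval_U_real_pos n hx1).ne'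
  simpa only [Real.sq_sqrt hg0.le] using Wseq_sq_eq_one_div_eval_U hsx hU m
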